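/- Let n ≥ 1, let L be a finite index set, for each l ∈ L let i_l ≠ j_l be indices in {1,…,n}, let h : {0,1}^n × {0,1}^L → ℝ, and let M be a real number with M > 0 and M > (max h − min h), where max and min are taken over the finite domain {0,1}^n × {0,1}^L. Then the maximum over all (x,y) ∈ {0,1}^n × {0,1}^L of h(x,y) − M·Σ_{l∈L} p(x_{i_l}, x_{j_l}, y_l) equals the maximum over all x ∈ {0,1}^n of h(x, (x_{i_l}·x_{j_l})_{l∈L}). -/

import Mathlib

/-- The Rosenberg penalty `p(a,b,y) = a·b − 2·a·y − 2·b·y + 3·y` on real arguments. -/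
noncomputable def rosP (a b y : ℝ) : ℝ := a * b - 2 * a * y - 2 * b * y + 3 * y

/- A penalty that vanishes on the feasible points `s x` and is at least `1` elsewhere, weighted by
`M > max h − min h`, pushes every infeasible value `h z − M·P z < min h` below every feasible one. -/
theorem ciSup_sub_mul_penalty_eq {α β : Type*} [Finite α] [Nonempty β]
    (h P : α → ℝ) (s : β → α) {M : ℝ} (hM0 : 0 < M)
    (hM : (⨆ z, h z) - (⨅ z, h z) < M)
    (hP_feasible : ∀ x, P (s x) = 0) (hP_infeasible : ∀ z, z ∉ Set.range s → 1 ≤ P z) :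
    ⨆ z, (h z - M * P z) = ⨆ x, h (s x) := by
  have : Nonempty α := Nonempty.map s ‹_›
  have bdd_hs : BddAbove (Set.range fun x => h (s x)) :=
    (Finite.bddAbove_range h).mono (Set.range_comp_subset_range s h)
  apply le_antisymm
  · refine ciSup_le fun z => ?_
    by_cases hz : z ∈ Set.range s
    · obtain ⟨x, rfl⟩ := hz
      rw [hP_feasible, mul_zero, sub_zero]
      exact le_ciSup bdd_hs x
    · have hinf_le : (⨅ z, h z) ≤ ⨆ x, h (s x) :=
        (ciInf_le (Finite.bddBelow_range h) _).trans (le_ciSup bdd_hs (Classical.arbitrary β))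
      have hM_le : M ≤ M * P z := le_mul_of_one_le_right hM0.le (hP_infeasible z hz)
      linarith [le_ciSup (Finite.bddAbove_range h) z]
  · refine ciSup_le fun x => ?_
    have := le_ciSup (Finite.bddAbove_range fun z => h z - M * P z) (s x)
    rwa [hP_feasible, mul_zero, sub_zero] at this

theorem rosP_nonneg (a b y : Fin 2) :
    0 ≤ rosP ((a : ℕ) : ℝ) ((b : ℕ) : ℝ) ((y : ℕ) : ℝ) := by
  fin_cases a <;> fin_cases b <;> fin_cases y <;> norm_num [rosP]

theorem rosP_mul_eq_zero (a b : Fin 2) :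
    rosP ((a : ℕ) : ℝ) ((b : ℕ) : ℝ) (((a * b : Fin 2) : ℕ) : ℝ) = 0 := by
  fin_cases a <;> fin_cases b <;> norm_num [rosP]

theorem one_le_rosP_of_ne_mul {a b y : Fin 2} (hy : y ≠ a * b) :
    1 ≤ rosP ((a : ℕ) : ℝ) ((b : ℕ) : ℝ) ((y : ℕ) : ℝ) := by
  fin_cases a <;> fin_cases b <;> fin_cases y <;> simp_all <;> norm_num [rosP]

section RosenbergSum

variable {L : Type*} [Fintype L]

theorem sum_rosP_mul_eq_zero (a b : L → Fin 2) :
    ∑ l, rosP ((a l : ℕ) : ℝ) ((b l : ℕ) : ℝ) (((a l * b l : Fin 2) : ℕ) : ℝ) = 0 :=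
  Finset.sum_eq_zero fun _ _ => rosP_mul_eq_zero _ _

theorem one_le_sum_rosP_of_ne_mul {a b y : L → Fin 2} (hy : y ≠ fun l => a l * b l) :
    1 ≤ ∑ l, rosP ((a l : ℕ) : ℝ) ((b l : ℕ) : ℝ) ((y l : ℕ) : ℝ) := by
  obtain ⟨l, hl⟩ := Function.ne_iff.mp hy
  exact (one_le_rosP_of_ne_mul hl).trans <|
    Finset.single_le_sum (fun l _ => rosP_nonneg (a l) (b l) (y l)) (Finset.mem_univ l)

end RosenbergSum

theorem stmt_8_general (n : ℕ)
    {L : Type*} [Fintype L]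
    (i j : L → Fin n)
    (h : ((Fin n → Fin 2) × (L → Fin 2)) → ℝ)
    (M : ℝ) (hM0 : 0 < M)
    (hM : (⨆ z : (Fin n → Fin 2) × (L → Fin 2), h z) -
          (⨅ z : (Fin n → Fin 2) × (L → Fin 2), h z) < M) :
    (⨆ z : (Fin n → Fin 2) × (L → Fin 2),
        (h z - M * ∑ l : L,
          rosP ((z.1 (i l) : ℕ) : ℝ) ((z.1 (j l) : ℕ) : ℝ) ((z.2 l : ℕ) : ℝ))) =
    ⨆ x : Fin n → Fin 2, h (x, fun l => x (i l) * x (j l)) := by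
  refine ciSup_sub_mul_penalty_eq h _ (fun x => (x, fun l => x (i l) * x (j l))) hM0 hM
    (fun x => sum_rosP_mul_eq_zero _ _) fun z hz => one_le_sum_rosP_of_ne_mul fun hy => ?_
  exact hz ⟨z.1, Prod.ext rfl hy.symm⟩

/-- Let `n ≥ 1`, `L` a finite index set, for each `l ∈ L` indices `i_l ≠ j_l`,
`h : {0,1}^n × {0,1}^L → ℝ`, and `M` a real with `M > 0` and `M > max h − min h` (over the
finite domain).  Then the maximum over `(x,y) ∈ {0,1}^n × {0,1}^L` of
`h(x,y) − M·Σ_{l∈L} p(x_{i_l}, x_{j_l}, y_l)` equals the maximum over `x ∈ {0,1}^n` of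
`h(x, (x_{i_l}·x_{j_l})_{l∈L})`. -/
theorem stmt_8 (n : ℕ) (hn : 1 ≤ n)
    {L : Type*} [Fintype L]
    (i j : L → Fin n) (hij : ∀ l : L, i l ≠ j l)
    (h : ((Fin n → Fin 2) × (L → Fin 2)) → ℝ)
    (M : ℝ) (hM0 : 0 < M)
    (hM : (⨆ z : (Fin n → Fin 2) × (L → Fin 2), h z) -
          (⨅ z : (Fin n → Fin 2) × (L → Fin 2), h z) < M) :
    (⨆ z : (Fin n → Fin 2) × (L → Fin 2),
        (h z - M * ∑ l : L,
          rosP ((z.1 (i l) : ℕ) : ℝ) ((z.1 (j l) : ℕ) : ℝ) ((z.2 l : ℕ) : ℝ))) =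
    ⨆ x : Fin n → Fin 2, h (x, fun l => x (i l) * x (j l)) :=
  stmt_8_general n i j h M hM0 hM
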